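/- arXiv:1710.10097 — 3 statements merged into one kernel-verified Lean document; each statement's English description precedes it below -/
import Mathlib

section
/- Let G be a connected graph on n vertices that is not a tree. Then for every s ≥ 1 there exists an assignment of s×s real invertible matrix weights to the edges of G such that the rank of the associated Laplacian matrix L (formed from the inverses of the weights) is strictly less than (n−1)s. -/
/-!
Pick an edge `ab` of `G` that lies on a cycle, so that `G' = G - ab` is still connected, and let
`x` be the potential of a unit current from `a` to `b` in `G'`, i.e. `L_{G'} x = e_a - e_b`.
Then `x a - x b > 0` (it is the effective resistance), and giving `ab` the negative conductance
`-(x a - x b)⁻¹` (all other edges conductance `1`) makes the current through `ab` cancel the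
injected one: `x` joins the constants in the kernel of the weighted Laplacian `L_c`, so
`rank L_c ≤ n - 2`. With the scalar weights `(c e)⁻¹ • 1` the block Laplacian is `L_c ⊗ 1_s`,
whose rank is at most `s (n - 2) < s (n - 1)`.
-/

open Matrix Module Finset
open scoped Kronecker

/-- Matrix-weighted Laplacian: each edge weight is replaced by its inverse. -/
noncomputable def matLap {n s : ℕ} (G : SimpleGraph (Fin n)) [DecidableRel G.Adj]
    (w : Sym2 (Fin n) → Matrix (Fin s) (Fin s) ℝ) :
    Matrix (Fin n × Fin s) (Fin n × Fin s) ℝ :=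
  Matrix.of fun p q =>
    if p.1 = q.1 then (∑ k ∈ G.neighborFinset p.1, (w (Sym2.mk p.1 k))⁻¹) p.2 q.2
    else if G.Adj p.1 q.1 then (-(w (Sym2.mk p.1 q.1))⁻¹) p.2 q.2
    else 0

namespace Matrix

variable {m n K : Type*} [Fintype n] [Field K]

theorem rank_add_two_le_of_mulVec_eq_zero {A : Matrix m n K} {x : n → K} {a b : n}
    (hone : A *ᵥ (fun _ => 1) = 0) (hx : A *ᵥ x = 0) (hab : x a ≠ x b) :
    A.rank + 2 ≤ Fintype.card n := by
  have hli : LinearIndependent K ![fun _ => (1 : K), x] := by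
    rw [LinearIndependent.pair_iff]
    intro p q h
    have ha := congrFun h a
    have hb := congrFun h b
    simp only [Pi.add_apply, Pi.smul_apply, smul_eq_mul, mul_one, Pi.zero_apply] at ha hb
    have hq : q = 0 := by
      by_contra hq
      exact hab (mul_left_cancel₀ hq (by linear_combination ha - hb))
    subst hq
    simpa using ha
  have hspan : Submodule.span K (Set.range ![fun _ => (1 : K), x]) ≤
      LinearMap.ker A.mulVecLin := by
    rw [Submodule.span_le, Set.range_subset_iff]
    intro i
    fin_cases i <;> simpa
  have hker := Submodule.finrank_mono hspan
  rw [finrank_span_eq_card hli, Fintype.card_fin] at hker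
  have hrank := A.mulVecLin.finrank_range_add_finrank_ker
  rw [Module.finrank_fintype_fun_eq_card] at hrank
  rw [Matrix.rank]
  omega

theorem rank_kronecker_one_le [Fintype m] {ι : Type*} [Fintype ι] [DecidableEq ι]
    (A : Matrix m n K) :
    (A ⊗ₖ (1 : Matrix ι ι K)).rank ≤ Fintype.card ι * A.rank := by
  have hmulVec : ∀ (y : n × ι → K) (p : m × ι),
      ((A ⊗ₖ (1 : Matrix ι ι K)) *ᵥ y) p = (A *ᵥ fun j => y (j, p.2)) p.1 := by
    intro y p
    simp [mulVec, dotProduct, Fintype.sum_prod_type, one_apply]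
  let stack : (ι → LinearMap.ker A.mulVecLin) →ₗ[K]
      LinearMap.ker (A ⊗ₖ (1 : Matrix ι ι K)).mulVecLin :=
    { toFun := fun f => ⟨fun p => (f p.2 : n → K) p.1, by
        rw [LinearMap.mem_ker, mulVecLin_apply]
        ext p
        exact (hmulVec _ p).trans (congrFun (LinearMap.mem_ker.mp (f p.2).2) p.1)⟩
      map_add' := fun _ _ => rfl
      map_smul' := fun _ _ => rfl }
  have hstack : Function.Injective stack := by
    intro f g hfg
    ext β j
    exact congrFun (congrArg Subtype.val hfg) (j, β)
  have hker := LinearMap.finrank_le_finrank_of_injective hstack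
  have hA := A.mulVecLin.finrank_range_add_finrank_ker
  have hAk := (A ⊗ₖ (1 : Matrix ι ι K)).mulVecLin.finrank_range_add_finrank_ker
  simp only [Module.finrank_pi_fintype, Finset.sum_const, Finset.card_univ, smul_eq_mul,
    Module.finrank_self, mul_one, Fintype.card_prod] at hker hA hAk
  simp only [Matrix.rank]
  nlinarith

theorem inv_inv_smul_one {ι : Type*} [Fintype ι] [DecidableEq ι] (r : K) :
    (r⁻¹ • (1 : Matrix ι ι K))⁻¹ = r • 1 := by
  rcases eq_or_ne r 0 with rfl | hr
  · simp
  · exact inv_eq_left_inv (by rw [smul_mul_smul_comm, mul_inv_cancel₀ hr, one_mul, one_smul])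

end Matrix

namespace SimpleGraph

variable {V : Type*} {G : SimpleGraph V}

theorem Connected.exists_adj_connected_deleteEdges (hG : G.Connected) (hnt : ¬G.IsTree) :
    ∃ a b, G.Adj a b ∧ (G.deleteEdges {s(a, b)}).Connected := by
  have hcyc : ¬G.IsAcyclic := fun h => hnt ⟨hG, h⟩
  simp only [isAcyclic_iff_forall_adj_isBridge, not_forall] at hcyc
  obtain ⟨a, b, hab, hbridge⟩ := hcyc
  exact ⟨a, b, hab, hG.connected_delete_edge_of_not_isBridge hbridge⟩

variable [Fintype V] [DecidableEq V] [DecidableRel G.Adj]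

theorem sum_lapMatrix_mulVec {R : Type*} [CommRing R] (x : V → R) :
    ∑ i, (G.lapMatrix R *ᵥ x) i = 0 :=
  calc ∑ i, (G.lapMatrix R *ᵥ x) i = (fun _ => 1) ⬝ᵥ (G.lapMatrix R *ᵥ x) := by
        simp [dotProduct]
    _ = (G.lapMatrix R *ᵥ fun _ => 1) ⬝ᵥ x := by
        rw [dotProduct_mulVec, ← mulVec_transpose, (G.isSymm_lapMatrix (R := R)).eq]
    _ = 0 := by rw [lapMatrix_mulVec_const_eq_zero, zero_dotProduct]

theorem lapMatrix_mulVec_apply_eq_sum (x : V → ℝ) (i : V) :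
    (G.lapMatrix ℝ *ᵥ x) i = ∑ j ∈ G.neighborFinset i, (x i - x j) := by
  rw [lapMatrix_mulVec_apply, sum_sub_distrib, sum_const, card_neighborFinset_eq_degree,
    nsmul_eq_mul]

/-- The range of the Laplacian of a connected graph is the hyperplane of vectors with sum zero:
it lies inside it, and both have dimension `|V| - 1`. -/
theorem Connected.exists_lapMatrix_mulVec_eq (hG : G.Connected) {y : V → ℝ}
    (hy : ∑ i, y i = 0) : ∃ x, G.lapMatrix ℝ *ᵥ x = y := by
  have : Nonempty V := hG.nonempty
  let φ : Module.Dual ℝ (V → ℝ) := Fintype.linearCombination ℝ fun _ => 1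
  have hφ : ∀ z, φ z = ∑ i, z i := by simp [φ, Fintype.linearCombination_apply]
  have hφ0 : φ ≠ 0 := fun h => by
    simpa [hφ] using LinearMap.congr_fun h (Pi.single (Classical.arbitrary V) 1)
  have hle : LinearMap.range (G.lapMatrix ℝ).mulVecLin ≤ LinearMap.ker φ := by
    rintro _ ⟨x, rfl⟩
    simp [hφ, sum_lapMatrix_mulVec]
  have hker : finrank ℝ (LinearMap.ker (G.lapMatrix ℝ).mulVecLin) ≤ 1 := by
    rw [← Matrix.toLin'_apply', ← card_connectedComponent_eq_finrank_ker_toLin'_lapMatrix]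
    exact Fintype.card_le_one_iff_subsingleton.mpr hG.preconnected.subsingleton_connectedComponent
  have hrank := (G.lapMatrix ℝ).mulVecLin.finrank_range_add_finrank_ker
  have hφrank := φ.finrank_ker_add_one_of_ne_zero hφ0
  simp only [Module.finrank_fintype_fun_eq_card] at hrank hφrank
  have hrange := Submodule.eq_of_le_of_finrank_le hle (by omega)
  show y ∈ LinearMap.range (G.lapMatrix ℝ).mulVecLin
  rw [hrange, LinearMap.mem_ker, hφ, hy]

theorem sub_pos_of_lapMatrix_mulVec_eq {a b : V} (hab : a ≠ b) {x : V → ℝ}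
    (hx : G.lapMatrix ℝ *ᵥ x = Pi.single a 1 - Pi.single b 1) : 0 < x a - x b := by
  have hpsd := G.posSemidef_lapMatrix ℝ
  have hquad : x ⬝ᵥ (G.lapMatrix ℝ *ᵥ x) = x a - x b := by
    rw [hx, dotProduct_sub, dotProduct_single, dotProduct_single, mul_one, mul_one]
  refine lt_of_le_of_ne (hquad ▸ by simpa using hpsd.dotProduct_mulVec_nonneg x) fun h => ?_
  have hzero := (hpsd.dotProduct_mulVec_zero_iff x).mp (by simpa [hquad] using h.symm)
  simpa [hx, hab] using congrFun hzero a

variable (G) in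
/-- `matLap` with `1 × 1` weights `(c e)⁻¹`; the conductances `c e` may be negative. -/
def conductanceLap (c : Sym2 V → ℝ) : Matrix V V ℝ :=
  of fun i j => if i = j then ∑ k ∈ G.neighborFinset i, c s(i, k)
    else if G.Adj i j then -c s(i, j) else 0

theorem conductanceLap_mulVec_apply (c : Sym2 V → ℝ) (x : V → ℝ) (i : V) :
    (G.conductanceLap c *ᵥ x) i = ∑ j ∈ G.neighborFinset i, c s(i, j) * (x i - x j) := by
  have hentry : ∀ j, G.conductanceLap c i j =
      (if i = j then ∑ k ∈ G.neighborFinset i, c s(i, k) else 0) -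
        if G.Adj i j then c s(i, j) else 0 := by
    intro j
    by_cases h : i = j
    · subst h; simp [conductanceLap]
    · simp only [conductanceLap, of_apply, h, if_false, zero_sub]
      split_ifs <;> simp
  simp only [mulVec, dotProduct, hentry, sub_mul, ite_mul, zero_mul, sum_sub_distrib,
    sum_ite_eq, mem_univ, if_true, ← sum_filter, mul_sub, sum_mul]
  rw [neighborFinset_eq_filter]

theorem conductanceLap_mulVec_const (c : Sym2 V → ℝ) (r : ℝ) :
    G.conductanceLap c *ᵥ (fun _ => r) = 0 := by
  ext i
  simp [conductanceLap_mulVec_apply]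

theorem conductanceLap_mulVec_eq_of_adj {a b : V} (hab : G.Adj a b) (t : ℝ) (x : V → ℝ) :
    G.conductanceLap (fun e => if e = s(a, b) then t else 1) *ᵥ x =
      (G.deleteEdges {s(a, b)}).lapMatrix ℝ *ᵥ x +
        (t * (x a - x b)) • (Pi.single a 1 - Pi.single b 1) := by
  ext i
  rw [conductanceLap_mulVec_apply, Pi.add_apply, lapMatrix_mulVec_apply_eq_sum, Pi.smul_apply,
    ← sum_filter_not_add_sum_filter _ (fun j => s(i, j) = s(a, b))]
  have hrest : (G.neighborFinset i).filter (fun j => ¬s(i, j) = s(a, b)) =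
      (G.deleteEdges {s(a, b)}).neighborFinset i := by
    ext j
    simp [deleteEdges_adj]
  have hne := hab.ne
  have hedge : (G.neighborFinset i).filter (fun j => s(i, j) = s(a, b)) =
      if i = a then {b} else if i = b then {a} else ∅ := by
    ext j
    have := hab.symm
    simp only [mem_filter, mem_neighborFinset]
    split_ifs <;> grind
  have hone : ∀ j ∈ (G.neighborFinset i).filter (fun j => ¬s(i, j) = s(a, b)),
      (if s(i, j) = s(a, b) then t else 1) * (x i - x j) = x i - x j := fun j hj => by
    rw [if_neg (mem_filter.1 hj).2, one_mul]
  rw [sum_congr rfl hone, hrest, hedge]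
  split_ifs with ha hb
  · subst ha
    simp [hne]
  · subst hb
    simp [hne]
    ring
  · simp [ha, hb]

theorem Connected.exists_conductanceLap_rank_add_two_le (hG : G.Connected) (hnt : ¬G.IsTree) :
    ∃ c : Sym2 V → ℝ, (∀ e, c e ≠ 0) ∧ (G.conductanceLap c).rank + 2 ≤ Fintype.card V := by
  obtain ⟨a, b, hab, hconn⟩ := hG.exists_adj_connected_deleteEdges hnt
  obtain ⟨x, hx⟩ := hconn.exists_lapMatrix_mulVec_eq (y := Pi.single a 1 - Pi.single b 1)
    (by simp [sum_sub_distrib])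
  have hq := sub_pos_of_lapMatrix_mulVec_eq hab.ne hx
  refine ⟨fun e => if e = s(a, b) then -(x a - x b)⁻¹ else 1,
    fun e => by dsimp only; split_ifs; exacts [by simp [hq.ne'], one_ne_zero], ?_⟩
  have hker : G.conductanceLap (fun e => if e = s(a, b) then -(x a - x b)⁻¹ else 1) *ᵥ x = 0 := by
    rw [conductanceLap_mulVec_eq_of_adj hab, hx, neg_mul, inv_mul_cancel₀ hq.ne']
    simp
  exact rank_add_two_le_of_mulVec_eq_zero (conductanceLap_mulVec_const _ 1) hker
    (sub_ne_zero.mp hq.ne')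

end SimpleGraph

theorem matLap_inv_smul_one {n s : ℕ} (G : SimpleGraph (Fin n)) [DecidableRel G.Adj]
    (c : Sym2 (Fin n) → ℝ) :
    matLap G (fun e => (c e)⁻¹ • (1 : Matrix (Fin s) (Fin s) ℝ)) = G.conductanceLap c ⊗ₖ 1 := by
  ext ⟨i, β⟩ ⟨j, γ⟩
  simp only [matLap, SimpleGraph.conductanceLap, of_apply, kroneckerMap_apply, inv_inv_smul_one]
  rcases eq_or_ne β γ with rfl | hβγ <;> split_ifs <;> simp [Matrix.sum_apply, one_apply_ne, *]

/-- Let `G` be a connected graph on `n` vertices that is not a tree. Then for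
every `s ≥ 1` there exists an assignment of `s × s` real invertible matrix weights to the
edges of `G` such that the rank of the associated Laplacian (formed from the inverses of the
weights) is strictly less than `(n-1)s`. -/
theorem exists_weights_rank_lt_of_not_tree {n : ℕ}
    (G : SimpleGraph (Fin n)) [DecidableRel G.Adj] (hG : G.Connected) (hnt : ¬ G.IsTree) :
    ∀ s : ℕ, 1 ≤ s →
      ∃ w : Sym2 (Fin n) → Matrix (Fin s) (Fin s) ℝ,
        (∀ e ∈ G.edgeSet, IsUnit (w e)) ∧ (matLap G w).rank < (n - 1) * s := by
  intro s hs
  obtain ⟨c, hc, hrank⟩ := hG.exists_conductanceLap_rank_add_two_le hnt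
  rw [Fintype.card_fin] at hrank
  refine ⟨fun e => (c e)⁻¹ • 1, fun e _ => isUnit_one.smul (Units.mk0 _ (inv_ne_zero (hc e))), ?_⟩
  rw [matLap_inv_smul_one]
  calc (G.conductanceLap c ⊗ₖ 1).rank ≤ s * (G.conductanceLap c).rank := by
        simpa using rank_kronecker_one_le (ι := Fin s) (G.conductanceLap c)
    _ < (n - 1) * s := by
        have : (G.conductanceLap c).rank + 1 ≤ n - 1 := by omega
        nlinarith
end

section
/- Let T be a tree on n vertices with s×s real matrix edge weights W_1,…,W_{n−1} such that the distance matrix D of T is invertible, and let L be the Laplacian matrix of T formed from the inverses of the weights. Then L·D·L = −2L. -/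
open Matrix

open SimpleGraph
open scoped Kronecker

section Laplacian

variable {n s : ℕ} (G : SimpleGraph (Fin n)) [DecidableRel G.Adj]
  (w : Sym2 (Fin n) → Matrix (Fin s) (Fin s) ℝ)

lemma matLap_apply_eq_sum (i k : Fin n) (a c : Fin s) :
    matLap G w (i, a) (k, c) = ∑ m ∈ G.neighborFinset i,
      (w s(i, m))⁻¹ a c * ((if k = i then 1 else 0) - if k = m then 1 else 0) := by
  by_cases hki : k = i
  · subst hki
    have : ∀ m ∈ G.neighborFinset k, k ≠ m := fun m hm => ((G.mem_neighborFinset k m).1 hm).ne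
    simp +contextual [matLap, Matrix.sum_apply, this]
  · simp only [matLap, of_apply, Ne.symm hki, if_false, hki, zero_sub, mul_neg,
      mul_ite, mul_one, mul_zero, Finset.sum_neg_distrib, Finset.sum_ite_eq, mem_neighborFinset]
    split_ifs <;> simp

lemma matLap_apply_swap (i k : Fin n) (a c : Fin s) :
    matLap G w (k, a) (i, c) = matLap G w (i, a) (k, c) := by
  by_cases hki : k = i
  · rw [hki]
  · simp [matLap, hki, Ne.symm hki, G.adj_comm k i, Sym2.eq_swap]

lemma sum_matLap_apply_fst (i : Fin n) (a c : Fin s) :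
    ∑ k, matLap G w (k, a) (i, c) = 0 := by
  rw [Finset.sum_congr rfl fun k _ => matLap_apply_swap G w i k a c]
  simp only [matLap_apply_eq_sum]
  rw [Finset.sum_comm' (t' := G.neighborFinset i) (s' := fun _ => Finset.univ) (by simp)]
  refine Finset.sum_eq_zero fun m _ => ?_
  simp [← Finset.mul_sum]

lemma matLap_mul_apply (M : Matrix (Fin n × Fin s) (Fin n × Fin s) ℝ) (i : Fin n) (a : Fin s)
    (q : Fin n × Fin s) :
    (matLap G w * M) (i, a) q = ∑ m ∈ G.neighborFinset i, ∑ c,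
      (w s(i, m))⁻¹ a c * (M (i, c) q - M (m, c) q) := by
  simp only [mul_apply, Fintype.sum_prod_type, matLap_apply_eq_sum, Finset.sum_mul]
  rw [Finset.sum_comm]
  simp_rw [Finset.sum_comm (s := Finset.univ (α := Fin n))]
  rw [Finset.sum_comm]
  simp [mul_assoc, ← Finset.mul_sum, sub_mul, Finset.sum_sub_distrib]

lemma replicateCol_kronecker_one_mul_matLap (f : Fin n → ℝ) :
    replicateCol (Fin n) f ⊗ₖ (1 : Matrix (Fin s) (Fin s) ℝ) * matLap G w = 0 := by
  ext ⟨i, a⟩ ⟨j, b⟩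
  simp [mul_apply, Fintype.sum_prod_type, one_apply, ← Finset.mul_sum,
    sum_matLap_apply_fst]

end Laplacian

section Distance

variable {V κ R : Type*} {G : SimpleGraph V}

lemma SimpleGraph.Walk.IsPath.sum_ite_eq_snd [DecidableEq V] [Ring R] {i j : V}
    [Fintype (G.neighborSet i)] {p : G.Walk i j} (hp : p.IsPath) :
    ∑ m ∈ G.neighborFinset i, (if m = p.snd then 1 else -1 : R) =
      2 - G.degree i - if i = j then 2 else 0 := by
  have hsign : ∀ m, (if m = p.snd then 1 else -1 : R) = (if m = p.snd then 2 else 0) - 1 := by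
    intro m; split_ifs <;> norm_num
  simp only [hsign, Finset.sum_sub_distrib, Finset.sum_ite_eq', mem_neighborFinset,
    Finset.sum_const, card_neighborFinset_eq_degree, nsmul_eq_mul, mul_one]
  by_cases hij : i = j
  · subst hij
    simp [(Walk.isPath_iff_nil.1 hp).eq_nil]
  · simp [hij, p.adj_snd (Walk.not_nil_of_ne hij)]

variable {w : Sym2 V → Matrix κ κ R} {D : Matrix (V × κ) (V × κ) R}

def IsDistanceMatrix [AddCommMonoid R] (G : SimpleGraph V) (w : Sym2 V → Matrix κ κ R)
    (D : Matrix (V × κ) (V × κ) R) : Prop :=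
  ∀ (i j : V) (p : G.Walk i j), p.IsPath → ∀ a b, D (i, a) (j, b) = (p.edges.map w).sum a b

lemma IsDistanceMatrix.apply_cons [AddCommMonoid R] (hD : IsDistanceMatrix G w D) {i m j : V}
    (h : G.Adj i m) (p : G.Walk m j) (hp : (Walk.cons h p).IsPath) (a b : κ) :
    D (i, a) (j, b) = w s(i, m) a b + D (m, a) (j, b) := by
  rw [hD _ _ _ hp, hD _ _ _ hp.of_cons]
  simp

lemma IsDistanceMatrix.sub_apply_of_adj [DecidableEq V] [CommRing R]
    (hD : IsDistanceMatrix G w D) (hG : G.IsAcyclic) {i j m : V} {p : G.Walk i j}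
    (hp : p.IsPath) (him : G.Adj i m) (a b : κ) :
    D (i, a) (j, b) - D (m, a) (j, b) = (if m = p.snd then 1 else -1) * w s(i, m) a b := by
  by_cases hm : m = p.snd
  · rw [if_pos hm, one_mul, sub_eq_iff_eq_add']
    cases p with
    | nil => exact absurd hm him.ne'
    | cons h q =>
      rw [Walk.snd_cons] at hm
      subst hm
      rw [hD.apply_cons h q hp a b, add_comm]
  · have hp' : (Walk.cons him.symm p).IsPath :=
      hp.cons fun hmp => hm (hG.eq_snd_of_adj_start hp him hmp)
    rw [if_neg hm, hD.apply_cons him.symm p hp' a b, Sym2.eq_swap]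
    ring

lemma IsDistanceMatrix.isUnit_weight [Fintype V] [DecidableEq V] [Field R] [Fintype κ]
    [DecidableEq κ] (hD : IsDistanceMatrix G w D) (hT : G.IsTree) (hDu : IsUnit D) {i m : V}
    (him : G.Adj i m) :
    IsUnit (w s(i, m)) := by
  rw [isUnit_iff_isUnit_det, isUnit_iff_ne_zero]
  intro hdet
  obtain ⟨v, hv0, hvW⟩ := exists_vecMul_eq_zero_iff.mpr hdet
  set u : V × κ → R := fun p => (if p.1 = i then v p.2 else 0) - if p.1 = m then v p.2 else 0
  have hu0 : u ≠ 0 := by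
    obtain ⟨c, hc⟩ := Function.ne_iff.mp hv0
    exact Function.ne_iff.mpr ⟨(i, c), by simpa [u, him.ne] using hc⟩
  have huD : u ᵥ* D = 0 := by
    ext ⟨j, b⟩
    obtain ⟨p, hp⟩ := (hT.existsUnique_path i j).exists
    calc (u ᵥ* D) (j, b) = ∑ c, v c * (D (i, c) (j, b) - D (m, c) (j, b)) := by
          rw [vecMul, dotProduct, Fintype.sum_prod_type, Finset.sum_comm]
          simp [u, sub_mul, ite_mul, Finset.sum_sub_distrib, mul_sub]
      _ = (if m = p.snd then 1 else -1) * (v ᵥ* w s(i, m)) b := by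
          simp only [hD.sub_apply_of_adj hT.isAcyclic hp him, vecMul, dotProduct,
            Finset.mul_sum]
          exact Finset.sum_congr rfl fun c _ => by ring
      _ = 0 := by simp [hvW]
  exact ((isUnit_iff_isUnit_det D).mp hDu).ne_zero (exists_vecMul_eq_zero_iff.mp ⟨u, hu0, huD⟩)

end Distance

lemma matLap_mul_eq_of_isDistanceMatrix {n s : ℕ} {G : SimpleGraph (Fin n)} [DecidableRel G.Adj]
    {w : Sym2 (Fin n) → Matrix (Fin s) (Fin s) ℝ} {D : Matrix (Fin n × Fin s) (Fin n × Fin s) ℝ}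
    (hT : G.IsTree) (hD : IsDistanceMatrix G w D) (hDu : IsUnit D) :
    matLap G w * D = replicateCol (Fin n) (fun i => 2 - (G.degree i : ℝ)) ⊗ₖ 1 - (2 : ℝ) • 1 := by
  ext ⟨i, a⟩ ⟨j, b⟩
  obtain ⟨p, hp⟩ := (hT.existsUnique_path i j).exists
  have hblock : ∀ m ∈ G.neighborFinset i,
      ∑ c, (w s(i, m))⁻¹ a c * (D (i, c) (j, b) - D (m, c) (j, b)) =
        (if m = p.snd then 1 else -1) * (1 : Matrix (Fin s) (Fin s) ℝ) a b := by
    intro m hm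
    have him := (G.mem_neighborFinset i m).1 hm
    have hW := (isUnit_iff_isUnit_det _).mp (hD.isUnit_weight hT hDu him)
    simp only [hD.sub_apply_of_adj hT.isAcyclic hp him, ← nonsing_inv_mul _ hW, mul_apply,
      Finset.mul_sum]
    exact Finset.sum_congr rfl fun c _ => by ring
  rw [matLap_mul_apply, Finset.sum_congr rfl hblock, ← Finset.sum_mul, hp.sum_ite_eq_snd]
  simp only [Matrix.sub_apply, kronecker_apply, replicateCol_apply, Matrix.smul_apply, one_apply,
    Prod.mk.injEq]
  split_ifs <;> simp_all

/-- Let `T` be a tree on `n` vertices with `s × s` real matrix edge weights such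
that the distance matrix `D` of `T` is invertible, and let `L` be the Laplacian formed from the
inverses of the weights.  Then `L · D · L = -2 L`. -/
theorem lap_mul_distanceMatrix_mul_lap {n s : ℕ}
    (G : SimpleGraph (Fin n)) [DecidableRel G.Adj] (hT : G.IsTree)
    (w : Sym2 (Fin n) → Matrix (Fin s) (Fin s) ℝ)
    (D : Matrix (Fin n × Fin s) (Fin n × Fin s) ℝ)
    (hD : ∀ (i j : Fin n) (p : G.Walk i j), p.IsPath →
      ∀ a b, D (i, a) (j, b) = ((p.edges.map w).sum) a b)
    (hDinv : IsUnit D) :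
    matLap G w * D * matLap G w = (-2 : ℝ) • matLap G w := by
  rw [matLap_mul_eq_of_isDistanceMatrix hT hD hDinv, sub_mul,
    replicateCol_kronecker_one_mul_matLap, smul_mul, one_mul, zero_sub, neg_smul]
end

section
/- Let T be a tree on n vertices with s×s real matrix edge weights W_1,…,W_{n−1} such that the distance matrix D of T is invertible, and let L be the Laplacian matrix of T formed from the inverses of the weights. Let J denote the n×n all-ones matrix. Then D^{-1} − L is invertible and (D^{-1} − L)^{-1} = (1/3)D + (1/3) J ⊗ (∑_{i=1}^{n−1} W_i). -/
open Matrix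
open scoped Kronecker

namespace SimpleGraph

lemma sum_dart_fst_eq_sum_degree_smul {V M : Type*} {G : SimpleGraph V} [Fintype V]
    [DecidableEq V] [DecidableRel G.Adj] [AddCommMonoid M] (g : V → M) :
    ∑ d : G.Dart, g d.fst = ∑ v, G.degree v • g v := by
  rw [← Finset.sum_fiberwise_of_maps_to (g := fun d : G.Dart => d.fst) (t := Finset.univ)
    fun _ _ => Finset.mem_univ _]
  refine Finset.sum_congr rfl fun v _ => ?_
  rw [Finset.sum_congr rfl fun d hd => by rw [(Finset.mem_filter.mp hd).2], Finset.sum_const,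
    dart_fst_fiber_card_eq_degree]

end SimpleGraph

namespace SimpleGraph.IsTree

variable {V : Type*} {G : SimpleGraph V} (hT : G.IsTree)

noncomputable def path (u v : V) : G.Walk u v :=
  (hT.existsUnique_path u v).exists.choose

lemma isPath_path (u v : V) : (hT.path u v).IsPath :=
  (hT.existsUnique_path u v).exists.choose_spec

lemma eq_path {u v : V} {p : G.Walk u v} (hp : p.IsPath) : p = hT.path u v :=
  (hT.existsUnique_path u v).unique hp (hT.isPath_path u v)

lemma path_self (u : V) : hT.path u u = .nil :=
  (hT.eq_path .nil).symm

lemma reverse_path (u v : V) : (hT.path u v).reverse = hT.path v u :=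
  hT.eq_path (hT.isPath_path u v).reverse

lemma path_eq_concat_or_path_eq_concat (u : V) {v w : V} (h : G.Adj v w) :
    hT.path u w = (hT.path u v).concat h ∨ hT.path u v = (hT.path u w).concat h.symm := by
  by_cases hv : v ∈ (hT.path u w).support
  · exact .inl <| hT.isAcyclic.path_concat (hT.isPath_path u v) (hT.isPath_path u w) h hv
  · refine .inr <| hT.isAcyclic.path_concat (hT.isPath_path u w) (hT.isPath_path u v) h.symm ?_
    exact hT.isAcyclic.mem_support_of_ne_mem_support_of_adj_of_isPath
      (hT.isPath_path u v) (hT.isPath_path u w) h hv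

/-- The neighbour of `v` on the path from the root `u` to `v` (junk value `u` at `v = u`). -/
noncomputable def parent (u v : V) : V :=
  (hT.path u v).penultimate

lemma parent_self (u : V) : hT.parent u u = u := by
  simp [parent, path_self]

lemma adj_parent {u v : V} (hv : v ≠ u) : G.Adj (hT.parent u v) v :=
  (hT.path u v).adj_penultimate (Walk.not_nil_of_ne hv.symm)

lemma path_eq_concat_parent {u v : V} (hv : v ≠ u) :
    hT.path u v = (hT.path u (hT.parent u v)).concat (hT.adj_parent hv) := by
  have h := (Walk.concat_dropLast (hT.adj_parent hv)).symm
  rwa [hT.eq_path (hT.isPath_path u v).dropLast] at h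

lemma parent_eq_of_path_eq_concat {u v w : V} {h : G.Adj v w}
    (hp : hT.path u w = (hT.path u v).concat h) : hT.parent u w = v := by
  rw [parent, hp, Walk.penultimate_concat]

lemma ne_of_path_eq_concat {u v w : V} {h : G.Adj v w}
    (hp : hT.path u w = (hT.path u v).concat h) : w ≠ u := by
  rintro rfl
  simpa [path_self] using congrArg Walk.length hp

lemma length_path_parent {u v : V} (hv : v ≠ u) :
    (hT.path u (hT.parent u v)).length + 1 = (hT.path u v).length := by
  rw [hT.path_eq_concat_parent hv, Walk.length_concat]

noncomputable def parentDart (u : V) (v : {v // v ≠ u}) : G.Dart :=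
  (hT.path u v).lastDart (Walk.not_nil_of_ne v.2.symm)

@[simp] lemma parentDart_fst (u : V) (v : {v // v ≠ u}) :
    (hT.parentDart u v).fst = hT.parent u v := rfl

@[simp] lemma parentDart_snd (u : V) (v : {v // v ≠ u}) : (hT.parentDart u v).snd = v := rfl

lemma parentDart_injective (u : V) : Function.Injective (hT.parentDart u) := fun v v' h =>
  Subtype.ext <| by simpa using congrArg (·.snd) h

lemma parentDart_ne_symm (u : V) (v v' : {v // v ≠ u}) :
    hT.parentDart u v ≠ (hT.parentDart u v').symm := by
  intro h
  have h₁ : hT.parent u v = v' := by simpa using congrArg (·.fst) h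
  have h₂ : hT.parent u v' = v := by simpa using (congrArg (·.snd) h).symm
  have hv := hT.length_path_parent v.2
  have hv' := hT.length_path_parent v'.2
  rw [h₁] at hv
  rw [h₂] at hv'
  omega

lemma exists_parentDart_eq (u : V) (d : G.Dart) :
    ∃ v, d = hT.parentDart u v ∨ d = (hT.parentDart u v).symm := by
  rcases hT.path_eq_concat_or_path_eq_concat u d.adj with hp | hp
  · refine ⟨⟨d.snd, hT.ne_of_path_eq_concat hp⟩, .inl ?_⟩
    ext <;> simp [hT.parent_eq_of_path_eq_concat hp]
  · refine ⟨⟨d.fst, hT.ne_of_path_eq_concat hp⟩, .inr ?_⟩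
    ext <;> simp [hT.parent_eq_of_path_eq_concat hp]

lemma bijective_sumElim_parentDart (u : V) :
    Function.Bijective (Sum.elim (hT.parentDart u) (Dart.symm ∘ hT.parentDart u)) := by
  refine ⟨?_, fun d => ?_⟩
  · rintro (v | v) (v' | v') h
    · exact congrArg _ (hT.parentDart_injective u h)
    · exact (hT.parentDart_ne_symm u v v' h).elim
    · exact (hT.parentDart_ne_symm u v' v h.symm).elim
    · exact congrArg _ (hT.parentDart_injective u (Dart.symm_involutive.injective h))
  · obtain ⟨v, rfl | rfl⟩ := hT.exists_parentDart_eq u d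
    exacts [⟨.inl v, rfl⟩, ⟨.inr v, rfl⟩]

section PathWeight

variable {M : Type*} [AddCommMonoid M] (f : Sym2 V → M)

noncomputable def pathWeight (u v : V) : M :=
  ((hT.path u v).edges.map f).sum

lemma pathWeight_self (u : V) : hT.pathWeight f u u = 0 := by
  simp [pathWeight, path_self]

lemma pathWeight_comm (u v : V) : hT.pathWeight f u v = hT.pathWeight f v u := by
  rw [pathWeight, pathWeight, ← reverse_path, Walk.edges_reverse, List.map_reverse,
    List.sum_reverse]

lemma pathWeight_of_path_eq_concat {u v w : V} {h : G.Adj v w}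
    (hp : hT.path u w = (hT.path u v).concat h) :
    hT.pathWeight f u w = hT.pathWeight f u v + f s(v, w) := by
  simp [pathWeight, hp, Walk.edges_concat]

lemma pathWeight_parent {u v : V} (hv : v ≠ u) :
    hT.pathWeight f u v = hT.pathWeight f u (hT.parent u v) + f s(hT.parent u v, v) :=
  hT.pathWeight_of_path_eq_concat f (hT.path_eq_concat_parent hv)

lemma pathWeight_of_adj_of_ne_parent {u v w : V} (h : G.Adj v w) (hw : w ≠ hT.parent u v) :
    hT.pathWeight f u w = hT.pathWeight f u v + f s(v, w) := by
  rcases hT.path_eq_concat_or_path_eq_concat u h with hp | hp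
  · exact hT.pathWeight_of_path_eq_concat f hp
  · exact absurd (hT.parent_eq_of_path_eq_concat hp).symm hw

lemma pathWeight_of_adj (u : V) {v w : V} (h : G.Adj v w) :
    hT.pathWeight f u w = hT.pathWeight f u v + f s(v, w) ∨
      hT.pathWeight f u v = hT.pathWeight f u w + f s(v, w) := by
  rcases hT.path_eq_concat_or_path_eq_concat u h with hp | hp
  · exact .inl (hT.pathWeight_of_path_eq_concat f hp)
  · exact .inr (by rw [hT.pathWeight_of_path_eq_concat f hp, Sym2.eq_swap])

variable [Fintype V] [DecidableEq V]

lemma sum_dart_eq_sum_parentDart [DecidableRel G.Adj] (u : V) (g : G.Dart → M) :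
    ∑ d, g d = ∑ v, (g (hT.parentDart u v) + g (hT.parentDart u v).symm) := by
  rw [← Fintype.sum_bijective _ (hT.bijective_sumElim_parentDart u) _ g fun _ => rfl,
    Fintype.sum_sum_type, Finset.sum_add_distrib]
  rfl

lemma sum_edgeFinset_eq_sum_parent [Fintype G.edgeSet] (u : V) :
    ∑ e ∈ G.edgeFinset, f e = ∑ v : {v // v ≠ u}, f s(hT.parent u v, v) := by
  rw [← Finset.sum_coe_sort]
  refine (Fintype.sum_bijective (fun v => (⟨(hT.parentDart u v).edge, ?_⟩ : G.edgeFinset))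
    ⟨?_, ?_⟩ _ _ fun _ => rfl).symm
  · simp [(hT.parentDart u v).edge_mem]
  · intro v v' h
    rcases (dart_edge_eq_iff _ _).mp (congrArg Subtype.val h) with h | h
    exacts [hT.parentDart_injective u h, (hT.parentDart_ne_symm u v v' h).elim]
  · rintro ⟨e, he⟩
    induction e using Sym2.ind with | _ a b => ?_
    obtain ⟨v, hv | hv⟩ := hT.exists_parentDart_eq u ⟨(a, b), mem_edgeFinset.mp he⟩
    · exact ⟨v, Subtype.ext (show (hT.parentDart u v).edge = _ by rw [← hv]; rfl)⟩
    · exact ⟨v, Subtype.ext (show (hT.parentDart u v).edge = _ by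
        rw [← Dart.edge_symm, ← hv]; rfl)⟩

theorem sum_degree_smul_pathWeight_add_sum_edgeFinset [DecidableRel G.Adj] [Fintype G.edgeSet]
    (u : V) : ∑ v, G.degree v • hT.pathWeight f u v + ∑ e ∈ G.edgeFinset, f e =
      2 • ∑ v, hT.pathWeight f u v := by
  have hparent (v : {v // v ≠ u}) : hT.pathWeight f u (hT.parent u v) + hT.pathWeight f u v +
      f s(hT.parent u v, v) = 2 • hT.pathWeight f u v := by
    rw [add_right_comm, ← hT.pathWeight_parent f v.2, two_nsmul]
  rw [← sum_dart_fst_eq_sum_degree_smul, hT.sum_dart_eq_sum_parentDart u,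
    hT.sum_edgeFinset_eq_sum_parent f u, ← Finset.sum_add_distrib]
  simp only [Dart.symm_toProd, Prod.fst_swap, parentDart_fst, parentDart_snd]
  rw [Finset.sum_congr rfl fun v _ => hparent v, Finset.smul_sum,
    ← Finset.sum_subtype (Finset.univ.erase u) (by simp) fun v => 2 • hT.pathWeight f u v,
    Finset.sum_erase _ (by rw [pathWeight_self, smul_zero])]

end PathWeight

variable [Fintype V] [DecidableEq V]

theorem sum_two_sub_degree_smul_pathWeight {R M : Type*} [Ring R] [AddCommGroup M] [Module R M]
    [DecidableRel G.Adj] [Fintype G.edgeSet] (f : Sym2 V → M) (u : V) :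
    ∑ v, ((2 : R) - G.degree v) • hT.pathWeight f u v = ∑ e ∈ G.edgeFinset, f e := by
  simp only [sub_smul, Finset.sum_sub_distrib, Nat.cast_smul_eq_nsmul, ofNat_smul_eq_nsmul,
    ← Finset.smul_sum]
  rw [← hT.sum_degree_smul_pathWeight_add_sum_edgeFinset f u, add_sub_cancel_left]

theorem isUnit_of_isUnit_pathWeight {m K : Type*} [Fintype m] [DecidableEq m] [Field K]
    {w : Sym2 V → Matrix m m K}
    (hD : IsUnit (of (hT.pathWeight w))) {a b : V} (h : G.Adj a b) : IsUnit (w s(a, b)) := by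
  rw [isUnit_iff_isUnit_det, isUnit_iff_ne_zero]
  intro hdet
  obtain ⟨x, hx, hwx⟩ := exists_mulVec_eq_zero_iff.mpr hdet
  -- columns `a` and `b` of the path-weight matrix differ by `± w s(a, b)`, which kills `x`
  have hcol (j : V) : (hT.pathWeight w j a - hT.pathWeight w j b) *ᵥ x = 0 := by
    rcases hT.pathWeight_of_adj w j h with h' | h'
    · rw [h', sub_add_cancel_left, neg_mulVec, hwx, neg_zero]
    · rw [h', add_sub_cancel_left, hwx]
  set y : V × m → K := fun p => (Pi.single a x - Pi.single b x : V → m → K) p.1 p.2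
  have hy : comp V V m m K (of (hT.pathWeight w)) *ᵥ y = 0 := by
    ext ⟨j, c⟩
    have := congrFun (hcol j) c
    simpa [y, mulVec, dotProduct, Fintype.sum_prod_type, Pi.single_apply, mul_sub, ite_apply,
      mul_ite, Finset.sum_ite_irrel, sub_mul] using this
  have hy0 : y ≠ 0 := fun h0 => hx (funext fun c => by simpa [y, h.ne'] using congrFun h0 (a, c))
  exact ((isUnit_iff_isUnit_det _).mp ((isUnit_comp_iff _ _ _).mpr hD)).ne_zero
    (exists_mulVec_eq_zero_iff.mp ⟨y, hy0, hy⟩)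

end SimpleGraph.IsTree

section BlockLaplacian

variable {V m R : Type*} [Fintype V] [DecidableEq V] [Fintype m] [DecidableEq m] [CommRing R]
  (G : SimpleGraph V) [DecidableRel G.Adj] (w : Sym2 V → Matrix m m R)

noncomputable def blockLap : Matrix V V (Matrix m m R) :=
  diagonal (fun i => ∑ k ∈ G.neighborFinset i, (w s(i, k))⁻¹) -
    of fun i j => if G.Adj i j then (w s(i, j))⁻¹ else 0

lemma blockLap_mul_apply {V' : Type*} (X : Matrix V V' (Matrix m m R)) (i : V) (j : V') :
    (blockLap G w * X) i j = ∑ k ∈ G.neighborFinset i, (w s(i, k))⁻¹ * (X i j - X k j) := by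
  rw [blockLap, Matrix.sub_mul, Matrix.sub_apply, diagonal_mul, mul_apply]
  simp only [of_apply, ite_mul, zero_mul]
  rw [← Finset.sum_filter, ← SimpleGraph.neighborFinset_eq_filter, Finset.sum_mul,
    ← Finset.sum_sub_distrib]
  simp only [mul_sub]

lemma blockLap_mul_const {V' : Type*} (S : Matrix m m R) :
    blockLap G w * of (fun (_ : V) (_ : V') => S) = 0 :=
  Matrix.ext fun i j => by simp [blockLap_mul_apply]

variable {G} {w}

lemma blockLap_mul_pathWeight (hT : G.IsTree) (hw : ∀ ⦃a b⦄, G.Adj a b → IsUnit (w s(a, b))) :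
    blockLap G w * of (hT.pathWeight w) =
      of fun i j => ((2 : R) - G.degree i - if i = j then 2 else 0) • (1 : Matrix m m R) := by
  have hinv {a b : V} (h : G.Adj a b) : (w s(a, b))⁻¹ * w s(a, b) = 1 :=
    nonsing_inv_mul _ ((isUnit_iff_isUnit_det _).mp (hw h))
  ext1 i j
  have hterm : ∀ k ∈ G.neighborFinset i,
      (w s(i, k))⁻¹ * (hT.pathWeight w i j - hT.pathWeight w k j) =
        ((if k = hT.parent j i then 2 else 0) - 1 : R) • 1 := by
    intro k hk
    rw [SimpleGraph.mem_neighborFinset] at hk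
    rw [hT.pathWeight_comm w i j, hT.pathWeight_comm w k j]
    by_cases hkp : k = hT.parent j i
    · subst hkp
      have hij : i ≠ j := by
        rintro rfl
        exact hk.ne (hT.parent_self i).symm
      rw [if_pos rfl, hT.pathWeight_parent w hij, Sym2.eq_swap, add_sub_cancel_left,
        hinv hk.symm]
      norm_num
    · rw [if_neg hkp, hT.pathWeight_of_adj_of_ne_parent w hk hkp, sub_add_cancel_left, mul_neg,
        hinv hk]
      simp
  rw [blockLap_mul_apply]
  simp only [of_apply]
  rw [Finset.sum_congr rfl hterm, ← Finset.sum_smul, Finset.sum_sub_distrib, Finset.sum_ite_eq',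
    Finset.sum_const, SimpleGraph.card_neighborFinset_eq_degree, nsmul_one]
  congr 1
  by_cases hij : i = j
  · subst hij
    simp [hT.parent_self]
  · simp [hij, (hT.adj_parent hij).symm]

lemma pathWeight_mul_blockLap_mul_pathWeight (hT : G.IsTree)
    (hw : ∀ ⦃a b⦄, G.Adj a b → IsUnit (w s(a, b))) :
    of (hT.pathWeight w) * (blockLap G w * of (hT.pathWeight w)) =
      of (fun _ _ => ∑ e ∈ G.edgeFinset, w e) - (2 : R) • of (hT.pathWeight w) := by
  rw [blockLap_mul_pathWeight hT hw]
  ext1 i j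
  rw [mul_apply, Matrix.sub_apply, Matrix.smul_apply]
  simp only [of_apply, Matrix.mul_smul, Matrix.mul_one]
  rw [Finset.sum_congr rfl fun k _ => sub_smul _ _ _, Finset.sum_sub_distrib,
    hT.sum_two_sub_degree_smul_pathWeight]
  simp only [ite_smul, zero_smul, Finset.sum_ite_eq', Finset.mem_univ, if_true]

end BlockLaplacian

lemma comp_blockLap {n s : ℕ} (G : SimpleGraph (Fin n)) [DecidableRel G.Adj]
    (w : Sym2 (Fin n) → Matrix (Fin s) (Fin s) ℝ) :
    comp _ _ _ _ ℝ (blockLap G w) = matLap G w := by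
  ext ⟨i, a⟩ ⟨j, b⟩
  by_cases hij : i = j
  · subst hij
    simp [blockLap, matLap]
  · simp only [comp_apply, blockLap, matLap, Matrix.sub_apply, of_apply, diagonal_apply_ne _ hij,
      if_neg hij]
    split_ifs <;> simp

lemma comp_of_const {ι κ R : Type*} [MulOneClass R] (S : Matrix κ κ R) :
    comp ι ι κ κ R (of fun _ _ => S) = (of fun _ _ => (1 : R)) ⊗ₖ S := by
  ext ⟨i, a⟩ ⟨j, b⟩
  simp [kroneckerMap_apply]

theorem inv_sub_mul_add_eq_three {ι R : Type*} [Fintype ι] [DecidableEq ι] [CommRing R]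
    {A L J : Matrix ι ι R} (hA : IsUnit A) (hLJ : L * J = 0)
    (hALA : A * (L * A) = J - (2 : R) • A) : (A⁻¹ - L) * (A + J) = (3 : R) • 1 := by
  have hAA : A⁻¹ * A = 1 := nonsing_inv_mul A ((isUnit_iff_isUnit_det A).mp hA)
  have hLA : L * A = A⁻¹ * J - (2 : R) • 1 := calc
    L * A = A⁻¹ * (A * (L * A)) := by rw [← mul_assoc, hAA, one_mul]
    _ = A⁻¹ * J - (2 : R) • 1 := by rw [hALA, mul_sub, Matrix.mul_smul, hAA]
  rw [sub_mul, mul_add, mul_add, hAA, hLA, hLJ, add_zero]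
  module

/-- Let `T` be a tree on `n` vertices with `s × s` real matrix edge weights such
that the distance matrix `D` of `T` is invertible, and let `L` be the Laplacian formed from the
inverses of the weights, and `J` the all-ones `n × n` matrix.  Then `D⁻¹ - L` is invertible and
`(D⁻¹ - L)⁻¹ = (1/3) D + (1/3) J ⊗ (∑ᵢ Wᵢ)`. -/
theorem inv_distInv_sub_lap {n s : ℕ}
    (G : SimpleGraph (Fin n)) [DecidableRel G.Adj] (hT : G.IsTree)
    (w : Sym2 (Fin n) → Matrix (Fin s) (Fin s) ℝ)
    (D : Matrix (Fin n × Fin s) (Fin n × Fin s) ℝ)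
    (hD : ∀ (i j : Fin n) (p : G.Walk i j), p.IsPath →
      ∀ a b, D (i, a) (j, b) = ((p.edges.map w).sum) a b)
    (hDinv : IsUnit D) :
    IsUnit (D⁻¹ - matLap G w) ∧
      (D⁻¹ - matLap G w)⁻¹ = ((1/3) : ℝ) • D +
        ((1/3) : ℝ) • ((Matrix.of fun _ _ => (1 : ℝ) : Matrix (Fin n) (Fin n) ℝ) ⊗ₖ
          (∑ e ∈ G.edgeFinset, w e)) := by
  set J := (of fun _ _ => (1 : ℝ) : Matrix (Fin n) (Fin n) ℝ) ⊗ₖ ∑ e ∈ G.edgeFinset, w e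
  let E := compAlgEquiv (Fin n) (Fin s) ℝ ℝ
  have hDE : E (of (hT.pathWeight w)) = D := by
    ext ⟨i, a⟩ ⟨j, b⟩
    exact (hD i j _ (hT.isPath_path i j) a b).symm
  have hLE : E (blockLap G w) = matLap G w := comp_blockLap G w
  have hJE : E (of fun _ _ => ∑ e ∈ G.edgeFinset, w e) = J := comp_of_const _
  have hw : ∀ ⦃a b⦄, G.Adj a b → IsUnit (w s(a, b)) :=
    fun _ _ => hT.isUnit_of_isUnit_pathWeight ((isUnit_map_iff E _).mp (hDE ▸ hDinv))
  have hthree : (D⁻¹ - matLap G w) * (D + J) = (3 : ℝ) • 1 := by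
    refine inv_sub_mul_add_eq_three hDinv ?_ ?_
    · rw [← hLE, ← hJE, ← map_mul, blockLap_mul_const, map_zero]
    · rw [← hDE, ← hLE, ← hJE, ← map_mul, ← map_mul,
        pathWeight_mul_blockLap_mul_pathWeight hT hw, map_sub, map_smul]
  have hright : (D⁻¹ - matLap G w) * ((1/3 : ℝ) • D + (1/3 : ℝ) • J) = 1 := by
    rw [← smul_add, Matrix.mul_smul, hthree, smul_smul]
    norm_num
  exact ⟨.of_mul_eq_one _ hright, inv_eq_right_inv hright⟩
end
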